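/- Every full-rank lattice in ℝ³ with the Euclidean norm is standard: it has a ℤ-basis b₁, b₂, b₃ with ‖bᵢ‖₂ = λᵢ for i = 1, 2, 3. -/

import Mathlib

/-- The i-th successive minimum of a lattice Λ ⊆ ℝⁿ (Euclidean norm). -/
noncomputable def succMin (n : ℕ) (Λ : Set (EuclideanSpace ℝ (Fin n))) (i : ℕ) : ℝ :=
  sInf {r : ℝ | i ≤ Module.finrank ℝ (Submodule.span ℝ (Λ ∩ Metric.closedBall 0 r))}

/-!
Take greedy vectors: `c₁` a shortest nonzero vector of `Λ`, `c₂` a shortest vector of `Λ` outside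
`ℝc₁`, `c₃` a shortest one outside `ℝc₁ + ℝc₂`. Their norms are the successive minima, so it
suffices that they generate `Λ`.

Let `W` be the span of the earlier vectors and `c` the next one, and suppose every point of `W` lies
within squared distance `ρ < 3/4 ‖c‖²` of `Λ ∩ W`. For `x = w + a c ∈ Λ` with `w ∈ W`, pick
`z ∈ Λ ∩ W` near `w` and put `u = w - z`, `δ = fract a`. If `δ ≠ 0`, then `u + δ c` and
`u + (δ - 1) c` are lattice vectors outside `W`, hence of norm at least `‖c‖`, yet
`(1 - δ) ‖u + δ c‖² + δ ‖u + (δ - 1) c‖² = ‖u‖² + δ (1 - δ) ‖c‖² < ‖c‖²`. So `x - ⌊a⌋ c ∈ W`.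

Projecting orthogonally, `ρ = (‖c₁‖² + ‖c₂‖²) / 4 ≤ ‖c₃‖² / 2` works for the plane of `c₁, c₂`.
A fourth step would only give `ρ ≤ 3/4 ‖c₄‖²`, which is why the argument stops in dimension three.
-/

open Submodule Metric Module
open scoped RealInnerProductSpace

lemma not_subset_of_finrank_lt {K V : Type*} [DivisionRing K] [AddCommGroup V] [Module K V]
    {s : Set V} (hs : span K s = ⊤) {W : Submodule K V} (hW : finrank K W < finrank K V) :
    ¬ s ⊆ W := by
  intro hsW
  have hWtop : W = ⊤ := top_le_iff.1 (hs ▸ span_le.2 hsW)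
  rw [hWtop, finrank_top] at hW
  exact hW.false

section Normed

variable {E : Type*} [NormedAddCommGroup E] [NormedSpace ℝ E]

structure IsShortestOutside (Λ : Submodule ℤ E) (W : Submodule ℝ E) (c : E) : Prop where
  mem : c ∈ Λ
  notMem : c ∉ W
  norm_le : ∀ x ∈ Λ, x ∉ W → ‖c‖ ≤ ‖x‖

namespace IsShortestOutside

variable {Λ : Submodule ℤ E} {W W' : Submodule ℝ E} {c c' x : E}

lemma ne_zero (h : IsShortestOutside Λ W c) : c ≠ 0 :=
  fun hc => h.notMem (hc ▸ W.zero_mem)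

lemma mem_of_norm_lt (h : IsShortestOutside Λ W c) (hx : x ∈ Λ) (hlt : ‖x‖ < ‖c‖) : x ∈ W := by
  by_contra hxW
  exact (h.norm_le x hx hxW).not_gt hlt

lemma norm_le_norm (h : IsShortestOutside Λ W c) (h' : IsShortestOutside Λ W' c') (hle : W ≤ W') :
    ‖c‖ ≤ ‖c'‖ :=
  h.norm_le c' h'.mem fun hc' => h'.notMem (hle hc')

end IsShortestOutside

lemma exists_isShortestOutside [FiniteDimensional ℝ E] (Λ : Submodule ℤ E) [DiscreteTopology Λ]
    {W : Submodule ℝ E} (hΛW : ¬ (Λ : Set E) ⊆ W) : ∃ c, IsShortestOutside Λ W c := by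
  obtain ⟨t, htΛ, htW⟩ := Set.not_subset.1 hΛW
  have : DiscreteTopology Λ.toAddSubgroup := ‹DiscreteTopology Λ›
  have hfin : (closedBall (0 : E) ‖t‖ ∩ Λ).Finite :=
    finite_isBounded_inter_isClosed DiscreteTopology.isDiscrete isBounded_closedBall
      (AddSubgroup.isClosed_of_discrete (H := Λ.toAddSubgroup))
  set S := {x | x ∈ closedBall (0 : E) ‖t‖ ∧ x ∈ Λ ∧ x ∉ W}
  have htS : t ∈ S := ⟨mem_closedBall_zero_iff.2 le_rfl, htΛ, htW⟩
  have hSfin : S.Finite := hfin.subset fun x hx => ⟨hx.1, hx.2.1⟩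
  obtain ⟨c, ⟨-, hcΛ, hcW⟩, hmin⟩ := Set.exists_min_image S (‖·‖) hSfin ⟨t, htS⟩
  refine ⟨c, hcΛ, hcW, fun x hxΛ hxW => ?_⟩
  rcases le_total ‖x‖ ‖t‖ with hxt | htx
  · exact hmin x ⟨mem_closedBall_zero_iff.2 hxt, hxΛ, hxW⟩
  · exact (hmin t htS).trans htx

end Normed

section InnerProduct

variable {E : Type*} [NormedAddCommGroup E] [InnerProductSpace ℝ E]

lemma norm_add_smul_sq (u c : E) (t : ℝ) :
    ‖u + t • c‖ ^ 2 = ‖u‖ ^ 2 + 2 * t * ⟪u, c⟫ + t ^ 2 * ‖c‖ ^ 2 := by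
  rw [norm_add_sq_real, real_inner_smul_right, norm_smul, Real.norm_eq_abs, mul_pow, sq_abs]
  ring

def CoversWithin (Λ : Submodule ℤ E) (W : Submodule ℝ E) (ρ : ℝ) : Prop :=
  ∀ w ∈ W, ∃ z ∈ Λ, z ∈ W ∧ ‖w - z‖ ^ 2 ≤ ρ

lemma coversWithin_bot (Λ : Submodule ℤ E) : CoversWithin Λ ⊥ 0 := by
  intro w hw
  rw [mem_bot] at hw
  exact ⟨0, zero_mem _, zero_mem _, by simp [hw]⟩

lemma CoversWithin.sup_span_singleton {Λ : Submodule ℤ E} {W : Submodule ℝ E}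
    [W.HasOrthogonalProjection] {ρ : ℝ} (hW : CoversWithin Λ W ρ) {c : E} (hc : c ∈ Λ) :
    CoversWithin Λ (W ⊔ ℝ ∙ c) (ρ + ‖c‖ ^ 2 / 4) := by
  intro p hp
  obtain ⟨w, hw, _, hac, rfl⟩ := mem_sup.1 hp
  obtain ⟨a, rfl⟩ := mem_span_singleton.1 hac
  obtain ⟨cW, hcW, q, hq, hcq⟩ := W.exists_add_mem_mem_orthogonal c
  set δ := a - round a
  obtain ⟨z, hzΛ, hzW, hz⟩ := hW (w + δ • cW) (add_mem hw (W.smul_mem δ hcW))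
  refine ⟨z + round a • c, add_mem hzΛ (Λ.smul_mem _ hc),
    add_mem (mem_sup_left hzW)
      (mem_sup_right ((ℝ ∙ c).smul_of_tower_mem _ (mem_span_singleton_self c))), ?_⟩
  have hsplit : w + a • c - (z + round a • c) = (w + δ • cW - z) + δ • q := by
    rw [← Int.cast_smul_eq_zsmul ℝ, hcq]
    module
  have horth : ⟪w + δ • cW - z, δ • q⟫ = 0 :=
    inner_right_of_mem_orthogonal (sub_mem (add_mem hw (W.smul_mem δ hcW)) hzW)
      (smul_mem _ _ hq)
  have hqc : ‖q‖ ^ 2 ≤ ‖c‖ ^ 2 := by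
    rw [hcq, norm_add_sq_real, inner_right_of_mem_orthogonal hcW hq]
    linarith [sq_nonneg ‖cW‖]
  have hδ : δ ^ 2 ≤ 1 / 4 := by
    have := abs_sub_round a
    rw [← sq_abs]
    nlinarith [abs_nonneg δ]
  rw [hsplit, norm_add_sq_real, horth, norm_smul, Real.norm_eq_abs, mul_pow, sq_abs]
  nlinarith [sq_nonneg δ, sq_nonneg ‖q‖]

lemma IsShortestOutside.exists_sub_zsmul_mem {Λ : Submodule ℤ E} {W : Submodule ℝ E} {c : E}
    {ρ : ℝ} (hc : IsShortestOutside Λ W c) (hW : CoversWithin Λ W ρ) (hρ : ρ < 3 / 4 * ‖c‖ ^ 2)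
    {x : E} (hx : x ∈ Λ) (hxW : x ∈ W ⊔ ℝ ∙ c) : ∃ m : ℤ, x - m • c ∈ W := by
  obtain ⟨w, hw, _, hac, rfl⟩ := mem_sup.1 hxW
  obtain ⟨a, rfl⟩ := mem_span_singleton.1 hac
  refine ⟨⌊a⌋, ?_⟩
  have hreduce : w + a • c - ⌊a⌋ • c = w + Int.fract a • c := by
    rw [← Int.cast_smul_eq_zsmul ℝ, ← Int.self_sub_floor]
    module
  set δ := Int.fract a
  by_contra hδW
  rw [hreduce] at hδW
  have hδ0 : δ ≠ 0 := fun h => hδW (by simpa [h] using hw)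
  obtain ⟨z, hzΛ, hzW, hz⟩ := hW w hw
  set u := w - z
  have hnotMem : ∀ t ≠ (0 : ℝ), u + t • c ∉ W := fun t ht h =>
    hc.notMem ((smul_mem_iff W ht).1 ((W.add_mem_iff_right (sub_mem hw hzW)).1 h))
  have hmem : u + δ • c ∈ Λ := by
    have : u + δ • c = (w + a • c - ⌊a⌋ • c) - z := by rw [hreduce, sub_add_eq_add_sub]
    rw [this]
    exact sub_mem (sub_mem hx (Λ.smul_mem _ hc.mem)) hzΛ
  have hmem' : u + (δ - 1) • c ∈ Λ := by
    have : u + (δ - 1) • c = (u + δ • c) - c := by module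
    rw [this]
    exact sub_mem hmem hc.mem
  have hδ : 0 ≤ δ ∧ δ < 1 := ⟨Int.fract_nonneg a, Int.fract_lt_one a⟩
  have h₁ := pow_le_pow_left₀ (norm_nonneg _) (hc.norm_le _ hmem (hnotMem δ hδ0)) 2
  have h₂ := pow_le_pow_left₀ (norm_nonneg _)
    (hc.norm_le _ hmem' (hnotMem (δ - 1) (by linarith))) 2
  have hconvex : (1 - δ) * ‖u + δ • c‖ ^ 2 + δ * ‖u + (δ - 1) • c‖ ^ 2 =
      ‖u‖ ^ 2 + δ * (1 - δ) * ‖c‖ ^ 2 := by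
    rw [norm_add_smul_sq, norm_add_smul_sq]
    ring
  nlinarith [mul_le_mul_of_nonneg_left h₁ (sub_nonneg.2 hδ.2.le),
    mul_le_mul_of_nonneg_left h₂ hδ.1, mul_nonneg (sq_nonneg (δ - 1 / 2)) (sq_nonneg ‖c‖)]

structure IsGreedyTriple (Λ : Submodule ℤ E) (c₁ c₂ c₃ : E) : Prop where
  first : IsShortestOutside Λ ⊥ c₁
  second : IsShortestOutside Λ (ℝ ∙ c₁) c₂
  third : IsShortestOutside Λ (ℝ ∙ c₁ ⊔ ℝ ∙ c₂) c₃

lemma exists_isGreedyTriple [FiniteDimensional ℝ E] (hE : 3 ≤ finrank ℝ E) (Λ : Submodule ℤ E)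
    [DiscreteTopology Λ] (hΛ : span ℝ (Λ : Set E) = ⊤) : ∃ c₁ c₂ c₃, IsGreedyTriple Λ c₁ c₂ c₃ := by
  obtain ⟨c₁, h₁⟩ := exists_isShortestOutside Λ (W := ⊥)
    (not_subset_of_finrank_lt hΛ (by rw [finrank_bot]; omega))
  obtain ⟨c₂, h₂⟩ := exists_isShortestOutside Λ (W := ℝ ∙ c₁)
    (not_subset_of_finrank_lt hΛ (by rw [finrank_span_singleton h₁.ne_zero]; omega))
  obtain ⟨c₃, h₃⟩ := exists_isShortestOutside Λ (W := ℝ ∙ c₁ ⊔ ℝ ∙ c₂)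
    (not_subset_of_finrank_lt hΛ (by
      rw [finrank_sup_span_singleton h₂.notMem, finrank_span_singleton h₁.ne_zero]; omega))
  exact ⟨c₁, c₂, c₃, h₁, h₂, h₃⟩

namespace IsGreedyTriple

variable {Λ : Submodule ℤ E} {c₁ c₂ c₃ : E}

lemma norm_le_norm₁₂ (h : IsGreedyTriple Λ c₁ c₂ c₃) : ‖c₁‖ ≤ ‖c₂‖ :=
  h.first.norm_le_norm h.second bot_le

lemma norm_le_norm₂₃ (h : IsGreedyTriple Λ c₁ c₂ c₃) : ‖c₂‖ ≤ ‖c₃‖ :=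
  h.second.norm_le_norm h.third le_sup_left

lemma mem_span_int (h : IsGreedyTriple Λ c₁ c₂ c₃) {x : E} (hxΛ : x ∈ Λ)
    (hx : x ∈ span ℝ {c₁, c₂, c₃}) : x ∈ span ℤ {c₁, c₂, c₃} := by
  have hcov₂ : CoversWithin Λ (ℝ ∙ c₁) (‖c₁‖ ^ 2 / 4) := by
    simpa using (coversWithin_bot Λ).sup_span_singleton h.first.mem
  have hcov₃ := hcov₂.sup_span_singleton h.second.mem
  have h₁₂ := h.norm_le_norm₁₂
  have h₂₃ := h.norm_le_norm₂₃
  have hc₁ := norm_pos_iff.2 h.first.ne_zero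
  rw [span_insert, span_insert, ← sup_assoc] at hx
  obtain ⟨m₃, hm₃⟩ := h.third.exists_sub_zsmul_mem hcov₃ (by nlinarith) hxΛ hx
  obtain ⟨m₂, hm₂⟩ := h.second.exists_sub_zsmul_mem hcov₂ (by nlinarith)
    (sub_mem hxΛ (Λ.smul_mem _ h.third.mem)) hm₃
  obtain ⟨m₁, hm₁⟩ := h.first.exists_sub_zsmul_mem (coversWithin_bot Λ) (by nlinarith)
    (sub_mem (sub_mem hxΛ (Λ.smul_mem _ h.third.mem)) (Λ.smul_mem _ h.second.mem))
    (by rwa [bot_sup_eq])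
  rw [mem_bot, sub_eq_zero, sub_eq_iff_eq_add, sub_eq_iff_eq_add] at hm₁
  rw [hm₁]
  refine add_mem (add_mem ?_ ?_) ?_ <;> exact smul_mem _ _ (subset_span (by simp))

variable [FiniteDimensional ℝ E]

lemma finrank_span_pair (h : IsGreedyTriple Λ c₁ c₂ c₃) : finrank ℝ (span ℝ {c₁, c₂}) = 2 := by
  rw [span_insert, finrank_sup_span_singleton h.second.notMem,
    finrank_span_singleton h.first.ne_zero]

lemma finrank_span_triple (h : IsGreedyTriple Λ c₁ c₂ c₃) :
    finrank ℝ (span ℝ {c₁, c₂, c₃}) = 3 := by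
  rw [span_insert, span_insert, ← sup_assoc, finrank_sup_span_singleton h.third.notMem,
    ← span_insert, h.finrank_span_pair]

lemma span_eq_top (hE : finrank ℝ E = 3) (h : IsGreedyTriple Λ c₁ c₂ c₃) :
    span ℝ {c₁, c₂, c₃} = ⊤ :=
  eq_top_of_finrank_eq (h.finrank_span_triple.trans hE.symm)

lemma span_int_eq (hE : finrank ℝ E = 3) (h : IsGreedyTriple Λ c₁ c₂ c₃) :
    span ℤ {c₁, c₂, c₃} = Λ := by
  refine le_antisymm (span_le.2 ?_) fun x hx => h.mem_span_int hx (by simp [h.span_eq_top hE])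
  simp [Set.insert_subset_iff, h.first.mem, h.second.mem, h.third.mem]

end IsGreedyTriple

end InnerProduct

lemma succMin_eq {n k : ℕ} {Λ S : Set (EuclideanSpace ℝ (Fin n))}
    {W : Submodule ℝ (EuclideanSpace ℝ (Fin n))} {r₀ : ℝ} (hSΛ : S ⊆ Λ) (hSr : ∀ x ∈ S, ‖x‖ ≤ r₀)
    (hS : k ≤ finrank ℝ (span ℝ S)) (hW : finrank ℝ W < k) (hΛW : ∀ x ∈ Λ, ‖x‖ < r₀ → x ∈ W) :
    succMin n Λ k = r₀ := by
  suffices {r | k ≤ finrank ℝ (span ℝ (Λ ∩ closedBall 0 r))} = Set.Ici r₀ by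
    rw [succMin, this, csInf_Ici]
  ext r
  rw [Set.mem_ofPred_eq, Set.mem_Ici]
  refine ⟨fun hr => ?_, fun hr => hS.trans (finrank_mono (span_mono fun x hx =>
    ⟨hSΛ hx, mem_closedBall_zero_iff.2 ((hSr x hx).trans hr)⟩))⟩
  by_contra! hlt
  have hle : span ℝ (Λ ∩ closedBall 0 r) ≤ W := span_le.2 fun x hx =>
    hΛW x hx.1 ((mem_closedBall_zero_iff.1 hx.2).trans_lt hlt)
  exact (finrank_mono hle).not_gt (hW.trans_le hr)

namespace IsGreedyTriple

variable {n : ℕ} {Λ : Submodule ℤ (EuclideanSpace ℝ (Fin n))} {c₁ c₂ c₃ : EuclideanSpace ℝ (Fin n)}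

lemma succMin_one (h : IsGreedyTriple Λ c₁ c₂ c₃) : succMin n Λ 1 = ‖c₁‖ :=
  succMin_eq (S := {c₁}) (W := ⊥) (by simpa using h.first.mem) (by simp)
    (by rw [finrank_span_singleton h.first.ne_zero]) (by simp) fun _ hx => h.first.mem_of_norm_lt hx

lemma succMin_two (h : IsGreedyTriple Λ c₁ c₂ c₃) : succMin n Λ 2 = ‖c₂‖ :=
  succMin_eq (S := {c₁, c₂}) (W := ℝ ∙ c₁)
    (by simp [Set.insert_subset_iff, h.first.mem, h.second.mem])
    (by simp [h.norm_le_norm₁₂]) h.finrank_span_pair.ge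
    (by simp [finrank_span_singleton h.first.ne_zero]) fun _ hx => h.second.mem_of_norm_lt hx

lemma succMin_three (h : IsGreedyTriple Λ c₁ c₂ c₃) : succMin n Λ 3 = ‖c₃‖ :=
  succMin_eq (S := {c₁, c₂, c₃}) (W := span ℝ {c₁, c₂})
    (by simp [Set.insert_subset_iff, h.first.mem, h.second.mem, h.third.mem])
    (by simp [h.norm_le_norm₂₃, h.norm_le_norm₁₂.trans h.norm_le_norm₂₃]) h.finrank_span_triple.ge
    (by simp [h.finrank_span_pair]) fun _ hx => by
      rw [span_insert]; exact h.third.mem_of_norm_lt hx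

end IsGreedyTriple

/-- Every full-rank lattice in ℝ³ is standard: some ℤ-basis achieves the successive minima. -/
theorem stmt_10 (b : Fin 3 → EuclideanSpace ℝ (Fin 3)) (hli : LinearIndependent ℝ b) :
    ∃ c : Fin 3 → EuclideanSpace ℝ (Fin 3),
      LinearIndependent ℝ c ∧
      Submodule.span ℤ (Set.range c) = Submodule.span ℤ (Set.range b) ∧
      ∀ i : Fin 3, ‖c i‖ =
        succMin 3 ((Submodule.span ℤ (Set.range b) :
          Submodule ℤ (EuclideanSpace ℝ (Fin 3))) : Set _) (i + 1) := by
  have hE : finrank ℝ (EuclideanSpace ℝ (Fin 3)) = 3 := finrank_euclideanSpace_fin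
  set B := basisOfLinearIndependentOfCardEqFinrank hli (by simp)
  have hB : ⇑B = b := coe_basisOfLinearIndependentOfCardEqFinrank hli _
  have hspan : span ℝ (span ℤ (Set.range b) : Set (EuclideanSpace ℝ (Fin 3))) = ⊤ := by
    rw [span_span_of_tower, ← hB, B.span_eq]
  rw [← hB] at hspan ⊢
  obtain ⟨c₁, c₂, c₃, h⟩ := exists_isGreedyTriple hE.ge _ hspan
  have hrange : Set.range ![c₁, c₂, c₃] = {c₁, c₂, c₃} := by
    rw [Matrix.range_cons, Matrix.range_cons_cons_empty, Set.singleton_union]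
  refine ⟨![c₁, c₂, c₃], linearIndependent_of_top_le_span_of_card_eq_finrank ?_ ?_, ?_, ?_⟩
  · rw [hrange, h.span_eq_top hE]
  · simp [hE]
  · rw [hrange, h.span_int_eq hE]
  · intro i
    fin_cases i
    exacts [h.succMin_one.symm, h.succMin_two.symm, h.succMin_three.symm]
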